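/- arXiv:1503.06920 — 4 statements merged into one kernel-verified Lean document; each statement's English description precedes it below -/
import Mathlib

section
/- Let q = p^e > 2 be a prime power, r ≥ 1 a divisor of 2e, and λ ∈ F* such that λ^{p^{tr}} = λ^q for some integer 0 ≤ t < 2e/r. Then the adjacency relation defining Γ_{r,λ}(q) is symmetric: if the pair of flags ((⟨a₁,b₁,c₁⟩, L₁), (⟨a₂,b₂,c₂⟩, L₂)) satisfies the defining condition (with some integer 0 ≤ i < 2e/r and some admissible nonisotropic vector (a₀,b₀,c₀)), then the pair ((⟨a₂,b₂,c₂⟩, L₂), (⟨a₁,b₁,c₁⟩, L₁)) also satisfies it (with some integer 0 ≤ j < 2e/r and some admissible nonisotropic vector). -/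
namespace UnitaryGraphPaper

variable (F : Type) [Field F]

/-- The Hermitian form β((x₁,y₁,z₁),(x₂,y₂,z₂)) = −x₁x₂^q + y₁z₂^q + z₁y₂^q. -/
def beta (q : ℕ) (u v : F × F × F) : F :=
  -(u.1 * v.1 ^ q) + u.2.1 * v.2.2 ^ q + u.2.2 * v.2.1 ^ q

/-- A vector is isotropic if β(u,u) = 0. -/
def Isotropic (q : ℕ) (u : F × F × F) : Prop := beta F q u u = 0

/-- Absolute points: 1-dimensional subspaces spanned by nonzero isotropic vectors. -/
def IsAbsolutePoint (q : ℕ) (P : Submodule F (F × F × F)) : Prop :=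
  ∃ u : F × F × F, u ≠ 0 ∧ Isotropic F q u ∧ P = Submodule.span F {u}

/-- Lines of the Hermitian unital: sets of absolute points contained in a 2-dimensional
subspace spanned by two linearly independent isotropic vectors. -/
def IsUnitalLine (q : ℕ) (l : Set (Submodule F (F × F × F))) : Prop :=
  ∃ u v : F × F × F, Isotropic F q u ∧ Isotropic F q v ∧ LinearIndependent F ![u, v] ∧
    l = {P | IsAbsolutePoint F q P ∧ P ≤ Submodule.span F ({u, v} : Set (F × F × F))}

/-- Flags of the Hermitian unital: incident point-line pairs. -/
def Flag (q : ℕ) : Type :=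
  {Pl : Submodule F (F × F × F) × Set (Submodule F (F × F × F)) //
    IsAbsolutePoint F q Pl.1 ∧ IsUnitalLine F q Pl.2 ∧ Pl.1 ∈ Pl.2}

/-- The set of absolute points ⟨x,y,z⟩ for which the determinant of the 3×3 matrix with
columns (x,y,z), u, w vanishes. -/
def detLine (q : ℕ) (u w : F × F × F) : Set (Submodule F (F × F × F)) :=
  {P | ∃ v : F × F × F, v ≠ 0 ∧ Isotropic F q v ∧ P = Submodule.span F {v} ∧
    (!![v.1, u.1, w.1; v.2.1, u.2.1, w.2.1; v.2.2, u.2.2, w.2.2] : Matrix (Fin 3) (Fin 3) F).det = 0}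

/-- The defining adjacency condition of the unitary graph Γ_{r,λ}(q), q = p^e. -/
def AdjCond (p q e r : ℕ) (lam : F) (v₁ v₂ : Flag F q) : Prop :=
  ∃ i : ℕ, i < 2 * e / r ∧ ∃ u₁ u₂ u₀ : F × F × F,
    u₁ ≠ 0 ∧ Isotropic F q u₁ ∧ v₁.1.1 = Submodule.span F {u₁} ∧
    u₂ ≠ 0 ∧ Isotropic F q u₂ ∧ v₂.1.1 = Submodule.span F {u₂} ∧
    ¬ Isotropic F q u₀ ∧ beta F q u₀ u₁ = 0 ∧ beta F q u₀ u₂ = 0 ∧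
    v₁.1.2 = detLine F q u₁ (u₀ + u₂) ∧
    v₂.1.2 = detLine F q u₂ (u₀ + lam ^ (q * p ^ (i * r)) • u₁)

/-- The unitary graph Γ_{r,λ}(q). -/
def unitaryGraph (p q e r : ℕ) (lam : F) : SimpleGraph (Flag F q) :=
  SimpleGraph.fromRel (AdjCond F p q e r lam)

/-- The absolute point ∞ = ⟨0,1,0⟩. -/
def ptInfty : Submodule F (F × F × F) := Submodule.span F {((0 : F), 1, 0)}

/-- The absolute point 0 = ⟨0,0,1⟩. -/
def ptZero : Submodule F (F × F × F) := Submodule.span F {((0 : F), 0, 1)}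

/-- The line L*: absolute points ⟨x,y,z⟩ with x = 0. -/
def lineLstar (q : ℕ) : Set (Submodule F (F × F × F)) :=
  {P | ∃ v : F × F × F, v ≠ 0 ∧ Isotropic F q v ∧ P = Submodule.span F {v} ∧ v.1 = 0}

/-- The line L: absolute points ⟨x,y,z⟩ with x = z. -/
def lineL (q : ℕ) : Set (Submodule F (F × F × F)) :=
  {P | ∃ v : F × F × F, v ≠ 0 ∧ Isotropic F q v ∧ P = Submodule.span F {v} ∧ v.1 = v.2.2}

/-- The line N(η): absolute points ⟨x,y,z⟩ with y = ηx. -/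
def lineN (q : ℕ) (eta : F) : Set (Submodule F (F × F × F)) :=
  {P | ∃ v : F × F × F, v ≠ 0 ∧ Isotropic F q v ∧ P = Submodule.span F {v} ∧ v.2.1 = eta * v.1}

/-- The line given by the homogenous equation A x + B y + C z = 0 (as a set of absolute
points). -/
def eqnLine (q : ℕ) (A B C : F) : Set (Submodule F (F × F × F)) :=
  {P | ∃ v : F × F × F, v ≠ 0 ∧ Isotropic F q v ∧ P = Submodule.span F {v} ∧
    A * v.1 + B * v.2.1 + C * v.2.2 = 0}

/-- Common neighbours of two vertices in a graph. -/
def commonNbrs {V : Type} (G : SimpleGraph V) (a b : V) : Set V :=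
  {c | G.Adj a c ∧ G.Adj b c}

lemma detLine_smul_left (q : ℕ) {c : F} (hc : c ≠ 0) (u w : F × F × F) :
    detLine F q (c • u) w = detLine F q u w := by
  have key : ∀ v : F × F × F,
      (!![v.1, (c • u).1, w.1; v.2.1, (c • u).2.1, w.2.1;
          v.2.2, (c • u).2.2, w.2.2] : Matrix (Fin 3) (Fin 3) F).det =
      c * (!![v.1, u.1, w.1; v.2.1, u.2.1, w.2.1;
          v.2.2, u.2.2, w.2.2] : Matrix (Fin 3) (Fin 3) F).det := by
    intro v
    simp [Matrix.det_fin_three, Prod.smul_fst, Prod.smul_snd, smul_eq_mul]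
    ring
  ext P
  simp only [detLine, Set.mem_setOf_eq]
  refine exists_congr fun v => and_congr_right fun _ => and_congr_right fun _ =>
    and_congr_right fun _ => ?_
  rw [key v, mul_eq_zero]
  simp [hc]

lemma isotropic_smul (q : ℕ) (c : F) {u : F × F × F} (h : Isotropic F q u) :
    Isotropic F q (c • u) := by
  simp only [Isotropic, beta, Prod.smul_fst, Prod.smul_snd, smul_eq_mul] at *
  calc -(c * u.1 * (c * u.1) ^ q) + c * u.2.1 * (c * u.2.2) ^ q +
        c * u.2.2 * (c * u.2.1) ^ q
      = c * c ^ q * (-(u.1 * u.1 ^ q) + u.2.1 * u.2.2 ^ q + u.2.2 * u.2.1 ^ q) := by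
        ring
    _ = 0 := by rw [h]; ring

lemma beta_smul_right (q : ℕ) (c : F) {u v : F × F × F} (h : beta F q u v = 0) :
    beta F q u (c • v) = 0 := by
  simp only [beta, Prod.smul_fst, Prod.smul_snd, smul_eq_mul] at *
  calc -(u.1 * (c * v.1) ^ q) + u.2.1 * (c * v.2.2) ^ q + u.2.2 * (c * v.2.1) ^ q
      = c ^ q * (-(u.1 * v.1 ^ q) + u.2.1 * v.2.2 ^ q + u.2.2 * v.2.1 ^ q) := by ring
    _ = 0 := by rw [h]; ring

theorem stmt5 (F : Type) [Field F] [Fintype F] (p q e r : ℕ)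
    (hp : p.Prime) (he : 0 < e) (hq : q = p ^ e) (hq2 : 2 < q)
    (hr : 0 < r) (hre : r ∣ 2 * e) (hF : Fintype.card F = q ^ 2)
    (lam : F) (hlam : lam ≠ 0)
    (hlamq : ∃ t : ℕ, t < 2 * e / r ∧ lam ^ p ^ (t * r) = lam ^ q)
    (v₁ v₂ : Flag F q) (h : AdjCond F p q e r lam v₁ v₂) :
    AdjCond F p q e r lam v₂ v₁ := by
  obtain ⟨i, hi, u₁, u₂, u₀, h1ne, h1iso, h1sp, h2ne, h2iso, h2sp, h0niso, h01, h02,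
    hL1, hL2⟩ := h
  set μ : F := lam ^ (q * p ^ (i * r)) with hμ
  have hμne : μ ≠ 0 := pow_ne_zero _ hlam
  have hν : (lam ^ q : F) ≠ 0 := pow_ne_zero _ hlam
  have hνinv : ((lam ^ q)⁻¹ : F) ≠ 0 := inv_ne_zero hν
  refine ⟨0, lt_of_le_of_lt (Nat.zero_le i) hi, (lam ^ q)⁻¹ • u₂, μ • u₁, u₀, ?_, ?_, ?_,
    ?_, ?_, ?_, h0niso, beta_smul_right F q _ h02, beta_smul_right F q _ h01, ?_, ?_⟩
  · exact smul_ne_zero hνinv h2ne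
  · exact isotropic_smul F q _ h2iso
  · rw [h2sp, Submodule.span_singleton_smul_eq (IsUnit.mk0 _ hνinv) _]
  · exact smul_ne_zero hμne h1ne
  · exact isotropic_smul F q _ h1iso
  · rw [h1sp, Submodule.span_singleton_smul_eq (IsUnit.mk0 _ hμne) _]
  · rw [detLine_smul_left F q hνinv]; exact hL2
  · rw [Nat.zero_mul, pow_zero, mul_one, smul_smul, mul_inv_cancel₀ hν, one_smul,
      detLine_smul_left F q hμne]
    exact hL1

end UnitaryGraphPaper
end

section
/- Let q = p^e > 2 be a prime power, r ≥ 1 a divisor of 2e, and λ ∈ F* such that λ^{p^{tr}} = λ^q for some integer 0 ≤ t < 2e/r. Then the vertices (∞, L*) and (0, L*) are not adjacent in the unitary graph Γ_{r,λ}(q); in particular Γ_{r,λ}(q) is not a complete graph. -/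
namespace UnitaryGraphPaper

variable (F : Type) [Field F]

lemma span_eq_scalar {F : Type} [Field F] {u s : F × F × F}
    (h : Submodule.span F {s} = Submodule.span F {u}) : ∃ a : F, u = a • s := by
  have hu : u ∈ Submodule.span F ({s} : Set (F × F × F)) := by
    rw [h]; exact Submodule.mem_span_singleton_self u
  obtain ⟨a, ha⟩ := Submodule.mem_span_singleton.mp hu
  exact ⟨a, ha.symm⟩

lemma ptInfty_ne_ptZero {F : Type} [Field F] : ptInfty F ≠ ptZero F := by
  intro h
  obtain ⟨a, ha⟩ := span_eq_scalar (F := F) h.symm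
  have : (1 : F) = a * 0 := congrArg (fun v : F × F × F => v.2.1) ha
  simp at this

/-- Core lemma: the adjacency condition fails between ∞ and 0 with line L*,
given the first point is ⟨0,y₀,0⟩-like and second ⟨0,0,z₀⟩-like. The statement is
specialized to the two cases we need. -/
lemma not_adjCond_infty_zero {F : Type} [Field F] (p q e r : ℕ) (hq0 : q ≠ 0)
    (lam : F) {x y : Flag F q}
    (hx : x.1 = (ptInfty F, lineLstar F q)) (hy : y.1 = (ptZero F, lineLstar F q)) :
    ¬ AdjCond F p q e r lam x y := by
  rintro ⟨i, hi, u₁, u₂, u₀, h1ne, h1iso, h1sp, h2ne, h2iso, h2sp, h0niso, hb1, hb2, hL1, hL2⟩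
  rw [hx] at h1sp hL1
  rw [hy] at h2sp
  simp only at h1sp h2sp hL1
  -- u₁ = (0, a, 0), a ≠ 0
  obtain ⟨a, ha⟩ := span_eq_scalar (h1sp : Submodule.span F _ = _)
  have h1eq : u₁ = ((0 : F), a, 0) := by
    rw [ha]; simp [Prod.ext_iff]
  have hane : a ≠ 0 := by rintro rfl; simp [h1eq] at h1ne
  -- u₂ = (0, 0, c), c ≠ 0
  obtain ⟨c, hc⟩ := span_eq_scalar (h2sp : Submodule.span F _ = _)
  have h2eq : u₂ = ((0 : F), 0, c) := by
    rw [hc]; simp [Prod.ext_iff]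
  have hcne : c ≠ 0 := by rintro rfl; simp [h2eq] at h2ne
  -- β(u₀,u₁)=0 gives u₀.2.2 = 0
  have h22 : u₀.2.2 = 0 := by
    rw [h1eq] at hb1
    simp only [beta, zero_pow hq0, mul_zero, mul_one, neg_zero, zero_add] at hb1
    rcases mul_eq_zero.mp hb1 with h | h
    · exact h
    · exact absurd (pow_eq_zero_iff hq0 |>.mp h) hane
  -- β(u₀,u₂)=0 gives u₀.2.1 = 0
  have h21 : u₀.2.1 = 0 := by
    rw [h2eq] at hb2
    simp only [beta, zero_pow hq0, mul_zero, mul_one, neg_zero, zero_add, add_zero] at hb2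
    rcases mul_eq_zero.mp hb2 with h | h
    · exact h
    · exact absurd (pow_eq_zero_iff hq0 |>.mp h) hcne
  -- u₀ nonisotropic gives u₀.1 ≠ 0
  have h01 : u₀.1 ≠ 0 := by
    intro h
    exact h0niso (by simp [Isotropic, beta, h, h21, h22, zero_pow hq0])
  -- ptZero ∈ L* = detLine q u₁ (u₀ + u₂)
  have hmem : ptZero F ∈ lineLstar F q := by
    refine ⟨((0 : F), 0, 1), ?_, ?_, rfl, rfl⟩
    · simp [Prod.ext_iff]
    · simp [Isotropic, beta, zero_pow hq0]
  rw [hL1] at hmem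
  obtain ⟨v', hv'ne, _, hsp', hdet⟩ := hmem
  obtain ⟨t, ht⟩ := span_eq_scalar (hsp' : Submodule.span F _ = _)
  have hveq : v' = ((0 : F), 0, t) := by rw [ht]; simp [Prod.ext_iff]
  have htne : t ≠ 0 := by rintro rfl; simp [hveq] at hv'ne
  rw [hveq, h1eq, h2eq] at hdet
  simp [Matrix.det_fin_three, Prod.fst_add, Prod.snd_add, h21, h22, h01, hane, htne] at hdet

lemma not_adjCond_zero_infty {F : Type} [Field F] (p q e r : ℕ) (hq0 : q ≠ 0)
    (lam : F) {x y : Flag F q}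
    (hx : x.1 = (ptZero F, lineLstar F q)) (hy : y.1 = (ptInfty F, lineLstar F q)) :
    ¬ AdjCond F p q e r lam x y := by
  rintro ⟨i, hi, u₁, u₂, u₀, h1ne, h1iso, h1sp, h2ne, h2iso, h2sp, h0niso, hb1, hb2, hL1, hL2⟩
  rw [hx] at h1sp hL1
  rw [hy] at h2sp
  simp only at h1sp h2sp hL1
  -- u₁ = (0, 0, a), a ≠ 0
  obtain ⟨a, ha⟩ := span_eq_scalar (h1sp : Submodule.span F _ = _)
  have h1eq : u₁ = ((0 : F), 0, a) := by
    rw [ha]; simp [Prod.ext_iff]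
  have hane : a ≠ 0 := by rintro rfl; simp [h1eq] at h1ne
  -- u₂ = (0, c, 0), c ≠ 0
  obtain ⟨c, hc⟩ := span_eq_scalar (h2sp : Submodule.span F _ = _)
  have h2eq : u₂ = ((0 : F), c, 0) := by
    rw [hc]; simp [Prod.ext_iff]
  have hcne : c ≠ 0 := by rintro rfl; simp [h2eq] at h2ne
  -- β(u₀,u₁)=0 gives u₀.2.1 = 0
  have h21 : u₀.2.1 = 0 := by
    rw [h1eq] at hb1
    simp only [beta, zero_pow hq0, mul_zero, mul_one, neg_zero, zero_add, add_zero] at hb1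
    rcases mul_eq_zero.mp hb1 with h | h
    · exact h
    · exact absurd (pow_eq_zero_iff hq0 |>.mp h) hane
  -- β(u₀,u₂)=0 gives u₀.2.2 = 0
  have h22 : u₀.2.2 = 0 := by
    rw [h2eq] at hb2
    simp only [beta, zero_pow hq0, mul_zero, mul_one, neg_zero, zero_add] at hb2
    rcases mul_eq_zero.mp hb2 with h | h
    · exact h
    · exact absurd (pow_eq_zero_iff hq0 |>.mp h) hcne
  -- u₀ nonisotropic gives u₀.1 ≠ 0
  have h01 : u₀.1 ≠ 0 := by
    intro h
    exact h0niso (by simp [Isotropic, beta, h, h21, h22, zero_pow hq0])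
  -- ptInfty ∈ L* = detLine q u₁ (u₀ + u₂)
  have hmem : ptInfty F ∈ lineLstar F q := by
    refine ⟨((0 : F), 1, 0), ?_, ?_, rfl, rfl⟩
    · simp [Prod.ext_iff]
    · simp [Isotropic, beta, zero_pow hq0]
  rw [hL1] at hmem
  obtain ⟨v', hv'ne, _, hsp', hdet⟩ := hmem
  obtain ⟨t, ht⟩ := span_eq_scalar (hsp' : Submodule.span F _ = _)
  have hveq : v' = ((0 : F), t, 0) := by rw [ht]; simp [Prod.ext_iff]
  have htne : t ≠ 0 := by rintro rfl; simp [hveq] at hv'ne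
  rw [hveq, h1eq, h2eq] at hdet
  simp [Matrix.det_fin_three, Prod.fst_add, Prod.snd_add, h21, h22, h01, hane, htne] at hdet

theorem stmt6 (F : Type) [Field F] [Fintype F] (p q e r : ℕ)
    (hp : p.Prime) (he : 0 < e) (hq : q = p ^ e) (hq2 : 2 < q)
    (hr : 0 < r) (hre : r ∣ 2 * e) (hF : Fintype.card F = q ^ 2)
    (lam : F) (hlam : lam ≠ 0)
    (hlamq : ∃ t : ℕ, t < 2 * e / r ∧ lam ^ p ^ (t * r) = lam ^ q)
    (v w : Flag F q) (hv : v.1 = (ptInfty F, lineLstar F q))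
    (hw : w.1 = (ptZero F, lineLstar F q)) :
    ¬ (unitaryGraph F p q e r lam).Adj v w ∧ unitaryGraph F p q e r lam ≠ ⊤ := by
  have hq0 : q ≠ 0 := by omega
  have hnadj : ¬ (unitaryGraph F p q e r lam).Adj v w := by
    rintro ⟨hne, hR | hR⟩
    · exact not_adjCond_infty_zero p q e r hq0 lam hv hw hR
    · exact not_adjCond_zero_infty p q e r hq0 lam hw hv hR
  refine ⟨hnadj, fun htop => ?_⟩
  apply hnadj
  rw [htop]
  intro hvw
  apply ptInfty_ne_ptZero (F := F)
  have : v.1.1 = w.1.1 := by rw [hvw]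
  rw [hv, hw] at this
  exact this

end UnitaryGraphPaper
end

section
/- Let q = p^e > 2 be a prime power, r ≥ 1 a divisor of 2e, λ ∈ F* with λ^{p^{tr}} = λ^q for some 0 ≤ t < 2e/r, and k = k_{r,λ}(q). A flag (⟨u₂⟩, L₂) ∈ V(q) is adjacent to (∞, L*) in Γ_{r,λ}(q) if and only if there exist an integer 0 ≤ i < k and a, b, c ∈ F* with b + b^q = a^{q+1} such that (i) u₂ is a scalar multiple of (ac, bc, c), and (ii) L₂ is the set of absolute points ⟨x,y,z⟩ satisfying (a^{q+1}c − λ^{q p^{ir}})x − acy + a(λ^{q p^{ir}} − b^q c)z = 0. -/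
/-! The flag (∞, L*) pins down its side of an adjacency: its point is ⟨(0,s,0)⟩, orthogonality
to it kills the last coordinate of the nonisotropic vector u₀, and ⟨0,0,1⟩ ∈ L* forces
u₀ = (-κα, y₀, 0), where (α, G, D) spans the other point and κ is 1 or a power of λ. Isotropy of
(α, G, D) gives D ≠ 0, so that point is ⟨(a, b, 1)⟩ with a = α/D, b = G/D and b + b^q = a^{q+1}.
The other line has the cross product of its two spanning vectors as coefficient vector, which is
proportional to the claimed one for a suitable c; as c is free, it absorbs the power of λ, and
i = 0 always works. Conversely, u₁ = (0,1,0) and u₀ = (-ac, -a^{q+1}c, 0) witness adjacency for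
every admissible i, and i < k ≤ 2e/r because λ^{p^{2e}} = λ in the field of q² elements. -/

namespace UnitaryGraphPaper

variable (F : Type) [Field F]

variable {F}

section Lines

variable {q : ℕ}

lemma detLine_eq_eqnLine (u w : F × F × F) :
    detLine F q u w = eqnLine F q (u.2.1 * w.2.2 - u.2.2 * w.2.1) (u.2.2 * w.1 - u.1 * w.2.2)
      (u.1 * w.2.1 - u.2.1 * w.1) := by
  refine Set.ext fun P => exists_congr fun v => and_congr_right fun _ =>
    and_congr_right fun _ => and_congr_right fun _ => ?_
  rw [Matrix.det_fin_three]
  simp only [Matrix.of_apply, Matrix.cons_val', Matrix.cons_val_zero, Matrix.cons_val_one,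
    Matrix.cons_val_two, Matrix.empty_val', Matrix.cons_val_fin_one, Matrix.head_cons,
    Matrix.tail_cons, Matrix.head_fin_const]
  constructor <;> intro h <;> linear_combination h

lemma eqnLine_eq_of_proportional {μ A B C A' B' C' : F} (hμ : μ ≠ 0)
    (hA : A' = μ * A) (hB : B' = μ * B) (hC : C' = μ * C) :
    eqnLine F q A' B' C' = eqnLine F q A B C := by
  subst hA hB hC
  refine Set.ext fun P => exists_congr fun v => and_congr_right fun _ =>
    and_congr_right fun _ => and_congr_right fun _ => ?_
  rw [show μ * A * v.1 + μ * B * v.2.1 + μ * C * v.2.2 = μ * (A * v.1 + B * v.2.1 + C * v.2.2) by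
    ring, mul_eq_zero, or_iff_right hμ]

lemma lineLstar_eq_eqnLine : lineLstar F q = eqnLine F q 1 0 0 := by
  refine Set.ext fun P => exists_congr fun v => and_congr_right fun _ =>
    and_congr_right fun _ => and_congr_right fun _ => ?_
  simp

lemma ptZero_mem_lineLstar (hq : q ≠ 0) : ptZero F ∈ lineLstar F q :=
  ⟨(0, 0, 1), by simp, by simp [Isotropic, beta, zero_pow hq], rfl, rfl⟩

lemma fst_eq_zero_of_lineLstar_eq_detLine (hq : q ≠ 0) {s : F} (hs : s ≠ 0) {w : F × F × F}
    (h : lineLstar F q = detLine F q (0, s, 0) w) : w.1 = 0 := by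
  obtain ⟨v, -, -, hv, hdet⟩ := h ▸ ptZero_mem_lineLstar hq
  obtain ⟨t, rfl⟩ := Submodule.span_singleton_eq_span_singleton.mp hv
  simpa [Matrix.det_fin_three, Units.smul_def, hs] using hdet

lemma span_ne_ptInfty {x y c : F} (hc : c ≠ 0) :
    Submodule.span F {(x, y, c)} ≠ ptInfty F := by
  intro h
  obtain ⟨t, ht⟩ := Submodule.span_singleton_eq_span_singleton.mp h
  simp_all [Prod.ext_iff, Units.smul_def]

end Lines

section NormalForm

variable {q : ℕ}

lemma isotropic_iff {x y z : F} :
    Isotropic F q (x, y, z) ↔ y * z ^ q + z * y ^ q = x ^ (q + 1) := by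
  simp only [Isotropic, beta]
  constructor <;> intro h <;> linear_combination h

lemma exists_normal_form (hq : q ≠ 0) {α G D κ y₀ τ μ : F} (hα : α ≠ 0) (hκ : κ ≠ 0)
    (hτ : τ ≠ 0) (hμ : μ ≠ 0) (hiso : Isotropic F q (α, G, D))
    (horth : κ * α ^ (q + 1) + y₀ * D ^ q = 0) :
    ∃ a b c : F, a ≠ 0 ∧ b ≠ 0 ∧ c ≠ 0 ∧ b + b ^ q = a ^ (q + 1) ∧
      Submodule.span F {(α, G, D)} = Submodule.span F {(a * c, b * c, c)} ∧
      detLine F q (α, G, D) (-(κ * α), y₀ + τ, 0) =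
        eqnLine F q (a ^ (q + 1) * c - μ) (-(a * c)) (a * (μ - b ^ q * c)) := by
  rw [isotropic_iff] at hiso
  have hαq : α ^ (q + 1) ≠ 0 := pow_ne_zero _ hα
  have hD : D ≠ 0 := by rintro rfl; simp [zero_pow hq] at hiso; exact hαq hiso.symm
  have hG : G ≠ 0 := by rintro rfl; simp [zero_pow hq] at hiso; exact hαq hiso.symm
  refine ⟨α / D, G / D, κ * D * μ / τ, div_ne_zero hα hD, div_ne_zero hG hD, by positivity,
    ?_, ?_, ?_⟩
  · rw [div_pow, div_pow]
    field_simp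
    linear_combination D ^ (q + 1) * hiso
  · rw [← Submodule.span_singleton_smul_eq (IsUnit.mk0 _ (by positivity : κ * μ / τ ≠ 0))]
    congr 2
    simp only [Prod.smul_mk, smul_eq_mul, Prod.mk.injEq]
    refine ⟨by field_simp, by field_simp, by field_simp⟩
  · rw [detLine_eq_eqnLine]
    refine (eqnLine_eq_of_proportional (μ := μ / (D * τ)) (by positivity) ?_ ?_ ?_).symm
    · rw [div_pow]
      field_simp
      linear_combination D ^ 2 * horth
    · field_simp
      ring
    · rw [div_pow]
      field_simp
      linear_combination -horth - κ * hiso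

lemma exists_normal_form_of_lineLstar_eq_detLine (hq : q ≠ 0) {u v u₀ : F × F × F} {κ ν μ : F}
    (hκ : κ ≠ 0) (hν : ν ≠ 0) (hμ : μ ≠ 0) (hu : ptInfty F = Submodule.span F {u})
    (hv : Isotropic F q v) (hu₀ : ¬ Isotropic F q u₀) (hu₀u : beta F q u₀ u = 0)
    (hu₀v : beta F q u₀ v = 0) (hL : lineLstar F q = detLine F q u (u₀ + κ • v)) :
    ∃ a b c : F, a ≠ 0 ∧ b ≠ 0 ∧ c ≠ 0 ∧ b + b ^ q = a ^ (q + 1) ∧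
      Submodule.span F {v} = Submodule.span F {(a * c, b * c, c)} ∧
      detLine F q v (u₀ + ν • u) =
        eqnLine F q (a ^ (q + 1) * c - μ) (-(a * c)) (a * (μ - b ^ q * c)) := by
  obtain ⟨s, rfl⟩ := Submodule.span_singleton_eq_span_singleton.mp hu
  obtain ⟨x₀, y₀, z₀⟩ := u₀
  obtain ⟨α, G, D⟩ := v
  have hz₀ : z₀ = 0 := by simpa [beta, zero_pow hq, Units.smul_def] using hu₀u
  subst hz₀
  have hx₀ : x₀ = -(κ * α) := by
    have := fst_eq_zero_of_lineLstar_eq_detLine hq s.ne_zero (by simpa [Units.smul_def] using hL)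
    linear_combination this
  subst hx₀
  have hα : α ≠ 0 := by
    rintro rfl
    exact hu₀ (by simp [Isotropic, beta, zero_pow hq])
  have horth : κ * α ^ (q + 1) + y₀ * D ^ q = 0 := by
    simp only [beta] at hu₀v
    linear_combination hu₀v
  simpa [Units.smul_def] using
    exists_normal_form hq hα hκ (mul_ne_zero hν s.ne_zero) hμ hv horth

end NormalForm

section Adjacency

variable {p q e r : ℕ} {lam : F} {vL w : Flag F q}

lemma exists_normal_form_of_adjCond (hq : q ≠ 0) (hlam : lam ≠ 0) {k : ℕ} (hk : 0 < k)
    (hvL : vL.1 = (ptInfty F, lineLstar F q))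
    (h : AdjCond F p q e r lam vL w ∨ AdjCond F p q e r lam w vL) :
    ∃ i < k, ∃ a b c : F, a ≠ 0 ∧ b ≠ 0 ∧ c ≠ 0 ∧ b + b ^ q = a ^ (q + 1) ∧
      w.1.1 = Submodule.span F {(a * c, b * c, c)} ∧
      w.1.2 = eqnLine F q (a ^ (q + 1) * c - lam ^ (q * p ^ (i * r))) (-(a * c))
        (a * (lam ^ (q * p ^ (i * r)) - b ^ q * c)) := by
  have hpow : ∀ n, lam ^ n ≠ 0 := fun n => pow_ne_zero n hlam
  refine ⟨0, hk, ?_⟩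
  rcases h with ⟨j, -, u₁, u₂, u₀, -, -, hvL₁, -, hu₂, hw₁, hu₀, h₀₁, h₀₂, hvL₂, hw₂⟩ |
      ⟨j, -, u₁, u₂, u₀, -, hu₁, hw₁, -, -, hvL₁, hu₀, h₀₁, h₀₂, hw₂, hvL₂⟩
  · rw [hvL] at hvL₁ hvL₂
    obtain ⟨a, b, c, ha, hb, hc, hab, hspan, hline⟩ :=
      exists_normal_form_of_lineLstar_eq_detLine hq one_ne_zero (hpow _) (hpow _) hvL₁ hu₂ hu₀
        h₀₁ h₀₂ (by rwa [one_smul])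
    exact ⟨a, b, c, ha, hb, hc, hab, hw₁.trans hspan, hw₂.trans hline⟩
  · rw [hvL] at hvL₁ hvL₂
    obtain ⟨a, b, c, ha, hb, hc, hab, hspan, hline⟩ :=
      exists_normal_form_of_lineLstar_eq_detLine hq (hpow _) one_ne_zero (hpow _) hvL₁ hu₁ hu₀
        h₀₂ h₀₁ hvL₂
    exact ⟨a, b, c, ha, hb, hc, hab, hw₁.trans hspan, hw₂.trans (by rwa [one_smul] at hline)⟩

lemma adjCond_of_normal_form (hq : q ≠ 0) {i : ℕ} (hi : i < 2 * e / r) {a b c : F}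
    (ha : a ≠ 0) (hc : c ≠ 0) (hab : b + b ^ q = a ^ (q + 1))
    (hvL : vL.1 = (ptInfty F, lineLstar F q))
    (hw₁ : w.1.1 = Submodule.span F {(a * c, b * c, c)})
    (hw₂ : w.1.2 = eqnLine F q (a ^ (q + 1) * c - lam ^ (q * p ^ (i * r))) (-(a * c))
      (a * (lam ^ (q * p ^ (i * r)) - b ^ q * c))) :
    AdjCond F p q e r lam vL w := by
  refine ⟨i, hi, (0, 1, 0), (a * c, b * c, c), (-(a * c), -(a ^ (q + 1) * c), 0),
    by simp, by simp [Isotropic, beta, zero_pow hq], by rw [hvL]; rfl, by simp [hc], ?_, hw₁,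
    ?_, by simp [beta, zero_pow hq], ?_, ?_, ?_⟩
  · rw [isotropic_iff]
    linear_combination c ^ (q + 1) * hab
  · rw [isotropic_iff]
    simpa [zero_pow hq] using (pow_ne_zero (q + 1) (neg_ne_zero.mpr (mul_ne_zero ha hc))).symm
  · simp only [beta]
    ring
  · rw [hvL, lineLstar_eq_eqnLine, detLine_eq_eqnLine]
    exact (eqnLine_eq_of_proportional hc (by simp) (by simp) (by simp)).symm
  · rw [hw₂, detLine_eq_eqnLine]
    refine (eqnLine_eq_of_proportional hc ?_ ?_ ?_).symm <;>
      simp only [Prod.fst_add, Prod.snd_add, Prod.smul_mk, smul_eq_mul]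
    · ring
    · ring
    · linear_combination (a * c ^ 2) * hab

end Adjacency

lemma pow_pow_two_mul_eq_self [Fintype F] {p q e : ℕ} (hq : q = p ^ e)
    (hF : Fintype.card F = q ^ 2) (x : F) : x ^ p ^ (2 * e) = x := by
  rw [pow_mul', ← hq, ← hF, FiniteField.pow_card]

theorem stmt8_general (F : Type) [Field F] [Fintype F] (p q e r : ℕ)
    (he : 0 < e) (hq : q = p ^ e) (hq2 : 2 < q)
    (hr : 0 < r) (hre : r ∣ 2 * e) (hF : Fintype.card F = q ^ 2)
    (lam : F) (hlam : lam ≠ 0)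
    (k : ℕ) (hk : 0 < k)
    (hkmin : ∀ j : ℕ, 0 < j → lam ^ p ^ (j * r) = lam → k ≤ j)
    (vL w : Flag F q) (hvL : vL.1 = (ptInfty F, lineLstar F q)) :
    (unitaryGraph F p q e r lam).Adj vL w ↔
      ∃ i < k, ∃ a b c : F, a ≠ 0 ∧ b ≠ 0 ∧ c ≠ 0 ∧ b + b ^ q = a ^ (q + 1) ∧
        w.1.1 = Submodule.span F {(a * c, b * c, c)} ∧
        w.1.2 = eqnLine F q (a ^ (q + 1) * c - lam ^ (q * p ^ (i * r))) (-(a * c))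
          (a * (lam ^ (q * p ^ (i * r)) - b ^ q * c)) := by
  have hq0 : q ≠ 0 := by omega
  rw [unitaryGraph, SimpleGraph.fromRel_adj]
  constructor
  · rintro ⟨-, h⟩
    exact exists_normal_form_of_adjCond hq0 hlam hk hvL h
  · rintro ⟨i, hik, a, b, c, ha, -, hc, hab, hw₁, hw₂⟩
    have hk_le : k ≤ 2 * e / r :=
      hkmin _ (Nat.div_pos (Nat.le_of_dvd (by omega) hre) hr)
        (by rw [Nat.div_mul_cancel hre, pow_pow_two_mul_eq_self hq hF])
    exact ⟨fun h => span_ne_ptInfty hc (hw₁.symm.trans (by rw [← h, hvL])),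
      Or.inl <| adjCond_of_normal_form hq0 (hik.trans_le hk_le) ha hc hab hvL hw₁ hw₂⟩

theorem stmt8 (F : Type) [Field F] [Fintype F] (p q e r : ℕ)
    (hp : p.Prime) (he : 0 < e) (hq : q = p ^ e) (hq2 : 2 < q)
    (hr : 0 < r) (hre : r ∣ 2 * e) (hF : Fintype.card F = q ^ 2)
    (lam : F) (hlam : lam ≠ 0)
    (hlamq : ∃ t : ℕ, t < 2 * e / r ∧ lam ^ p ^ (t * r) = lam ^ q)
    (k : ℕ) (hk : 0 < k) (hkfix : lam ^ p ^ (k * r) = lam)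
    (hkmin : ∀ j : ℕ, 0 < j → lam ^ p ^ (j * r) = lam → k ≤ j)
    (vL w : Flag F q) (hvL : vL.1 = (ptInfty F, lineLstar F q)) :
    (unitaryGraph F p q e r lam).Adj vL w ↔
      ∃ i < k, ∃ a b c : F, a ≠ 0 ∧ b ≠ 0 ∧ c ≠ 0 ∧ b + b ^ q = a ^ (q + 1) ∧
        w.1.1 = Submodule.span F {(a * c, b * c, c)} ∧
        w.1.2 = eqnLine F q (a ^ (q + 1) * c - lam ^ (q * p ^ (i * r))) (-(a * c))
          (a * (lam ^ (q * p ^ (i * r)) - b ^ q * c)) :=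
  stmt8_general F p q e r he hq hq2 hr hre hF lam hlam k hk hkmin vL w hvL

end UnitaryGraphPaper
end

section
/- Let q = p^e > 2 be a prime power, r ≥ 1 a divisor of 2e, and λ ∈ F* with λ^{p^{tr}} = λ^q for some 0 ≤ t < 2e/r. Then the vertices (∞, L) and (0, N) are adjacent in the unitary graph Γ_{r,λ}(q). -/
namespace UnitaryGraphPaper

variable (F : Type) [Field F]

theorem stmt12 (F : Type) [Field F] [Fintype F] (p q e r : ℕ)
    (hp : p.Prime) (he : 0 < e) (hq : q = p ^ e) (hq2 : 2 < q)
    (hr : 0 < r) (hre : r ∣ 2 * e) (hF : Fintype.card F = q ^ 2)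
    (lam : F) (hlam : lam ≠ 0)
    (hlamq : ∃ t : ℕ, t < 2 * e / r ∧ lam ^ p ^ (t * r) = lam ^ q)
    (vL w : Flag F q) (hvL : vL.1 = (ptInfty F, lineL F q))
    (hw : w.1 = (ptZero F, lineN F q (lam ^ q))) :
    (unitaryGraph F p q e r lam).Adj vL w := by
  have hq0 : q ≠ 0 := by omega
  have h01 : Isotropic F q ((0:F), 1, 0) := by
    simp [Isotropic, beta, zero_pow hq0]
  have h02 : Isotropic F q ((0:F), 0, 1) := by
    simp [Isotropic, beta, zero_pow hq0]
  have hne : vL ≠ w := by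
    intro h
    have h1 : vL.1.1 = w.1.1 := by rw [h]
    rw [hvL, hw] at h1
    have h1' : ptInfty F = ptZero F := h1
    have hmem : ((0:F), 1, 0) ∈ ptZero F := by
      rw [← h1', ptInfty]
      exact Submodule.mem_span_singleton_self _
    rw [ptZero, Submodule.mem_span_singleton] at hmem
    obtain ⟨a, ha⟩ := hmem
    simp [Prod.ext_iff] at ha
  rw [unitaryGraph, SimpleGraph.fromRel_adj]
  refine ⟨hne, Or.inl ?_⟩
  refine ⟨0, ?_, ((0:F), 1, 0), ((0:F), 0, 1), ((1:F), 0, 0), ?_, h01, ?_, ?_, h02, ?_,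
    ?_, ?_, ?_, ?_, ?_⟩
  · exact Nat.div_pos (Nat.le_of_dvd (by omega) hre) hr
  · simp [Prod.ext_iff]
  · rw [hvL]; rfl
  · simp [Prod.ext_iff]
  · rw [hw]; rfl
  · simp [Isotropic, beta]
  · simp [beta, zero_pow hq0]
  · simp [beta, zero_pow hq0]
  · rw [hvL]
    show lineL F q = _
    ext P
    simp only [lineL, detLine, Set.mem_setOf_eq]
    constructor
    · rintro ⟨v, hv0, hvi, hvs, hc⟩
      refine ⟨v, hv0, hvi, hvs, ?_⟩
      simp [Matrix.det_fin_three]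
      linear_combination hc
    · rintro ⟨v, hv0, hvi, hvs, hc⟩
      refine ⟨v, hv0, hvi, hvs, ?_⟩
      simp [Matrix.det_fin_three] at hc
      linear_combination hc
  · rw [hw]
    show lineN F q (lam ^ q) = _
    ext P
    simp only [lineN, detLine, Set.mem_setOf_eq]
    constructor
    · rintro ⟨v, hv0, hvi, hvs, hc⟩
      refine ⟨v, hv0, hvi, hvs, ?_⟩
      simp [Matrix.det_fin_three, Prod.smul_def]
      linear_combination hc
    · rintro ⟨v, hv0, hvi, hvs, hc⟩
      refine ⟨v, hv0, hvi, hvs, ?_⟩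
      simp [Matrix.det_fin_three, Prod.smul_def] at hc
      linear_combination hc

end UnitaryGraphPaper
end
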